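/- If a graph G has an error-correcting identifying code, then G has no two adjacent vertices both of degree 2. -/

import Mathlib

open SimpleGraph

variable {V : Type*}

/-- Closed neighborhood of `v` in `G`. -/
def closedNbhd (G : SimpleGraph V) (v : V) : Set V := insert v (G.neighborSet v)

/-- `S` is an error-correcting identifying code for `G`: every vertex is 3-dominated
and every pair of distinct vertices is 3-distinguished. -/
def IsErrIC (G : SimpleGraph V) (S : Set V) : Prop :=
  (∀ v : V, 3 ≤ (closedNbhd G v ∩ S).ncard) ∧
  ∀ u v : V, u ≠ v → 3 ≤ (symmDiff (closedNbhd G u ∩ S) (closedNbhd G v ∩ S)).ncard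

/-- `G` has no closed twins and no open twins. -/
def TwinFree (G : SimpleGraph V) : Prop :=
  ∀ u v : V, u ≠ v →
    closedNbhd G u ≠ closedNbhd G v ∧ G.neighborSet u ≠ G.neighborSet v

/-! If `u ~ v` both have degree 2, then `|N[u]| = |N[v]| = 3`, so 3-domination forces
`N[u], N[v] ⊆ S`. Both closed neighbourhoods contain `u` and `v`, hence
`|N[u] ∆ N[v]| ≤ 3 + 3 - 2·2 = 2`, contradicting 3-separation of `u` and `v`. -/

open scoped symmDiff

lemma Set.ncard_symmDiff_add_two_mul_ncard_inter {α : Type*} {s t : Set α} (hs : s.Finite)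
    (ht : t.Finite) : (s ∆ t).ncard + 2 * (s ∩ t).ncard = s.ncard + t.ncard := by
  have hsdiff := Set.ncard_sdiff_add_ncard_of_subset (s := s ∩ t) (t := s ∪ t)
    (Set.inter_subset_left.trans Set.subset_union_left) (hs.union ht)
  have hunion := Set.ncard_union_add_ncard_inter s t hs ht
  rw [show s ∆ t = (s ∪ t) \ (s ∩ t) from symmDiff_eq_sup_sdiff_inf s t]
  omega

lemma ncard_closedNbhd {G : SimpleGraph V} {v : V} (hv : (G.neighborSet v).Finite) :
    (closedNbhd G v).ncard = (G.neighborSet v).ncard + 1 :=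
  Set.ncard_insert_of_notMem G.notMem_neighborSet_self hv

lemma IsErrIC.closedNbhd_subset_of_ncard_eq_three {G : SimpleGraph V} {S : Set V} {v : V}
    (hS : IsErrIC G S) (hv : (closedNbhd G v).ncard = 3) : closedNbhd G v ⊆ S :=
  Set.inter_eq_left.mp <| Set.eq_of_subset_of_ncard_le Set.inter_subset_left
    (hv ▸ hS.1 v) (Set.finite_of_ncard_ne_zero (by omega))

lemma ncard_symmDiff_closedNbhd_add_four_le {G : SimpleGraph V} {u v : V} (huv : G.Adj u v)
    (hu : (closedNbhd G u).Finite) (hv : (closedNbhd G v).Finite) :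
    (closedNbhd G u ∆ closedNbhd G v).ncard + 4 ≤
      (closedNbhd G u).ncard + (closedNbhd G v).ncard := by
  have hpair : {u, v} ⊆ closedNbhd G u ∩ closedNbhd G v := by
    rintro x (rfl | rfl)
    · exact ⟨Set.mem_insert _ _, Set.mem_insert_of_mem _ huv.symm⟩
    · exact ⟨Set.mem_insert_of_mem _ huv, Set.mem_insert _ _⟩
  have hinter : 2 ≤ (closedNbhd G u ∩ closedNbhd G v).ncard :=
    Set.ncard_pair huv.ne ▸ Set.ncard_le_ncard hpair (hu.inter_of_left _)
  have := Set.ncard_symmDiff_add_two_mul_ncard_inter hu hv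
  omega

theorem stmt3_general (G : SimpleGraph V) (h : ∃ S : Set V, IsErrIC G S) :
    ∀ u v : V, G.Adj u v →
      ¬((G.neighborSet u).ncard = 2 ∧ (G.neighborSet v).ncard = 2) := by
  rintro u v huv ⟨hu, hv⟩
  obtain ⟨S, hS⟩ := h
  have hu3 : (closedNbhd G u).ncard = 3 := by
    rw [ncard_closedNbhd (Set.finite_of_ncard_ne_zero (by omega)), hu]
  have hv3 : (closedNbhd G v).ncard = 3 := by
    rw [ncard_closedNbhd (Set.finite_of_ncard_ne_zero (by omega)), hv]
  have hsep := hS.2 u v huv.ne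
  rw [Set.inter_eq_left.mpr (hS.closedNbhd_subset_of_ncard_eq_three hu3),
    Set.inter_eq_left.mpr (hS.closedNbhd_subset_of_ncard_eq_three hv3)] at hsep
  have hbound := ncard_symmDiff_closedNbhd_add_four_le huv (Set.finite_of_ncard_ne_zero (by omega))
    (Set.finite_of_ncard_ne_zero (by omega))
  omega

theorem stmt3 [Fintype V] (G : SimpleGraph V) (h : ∃ S : Set V, IsErrIC G S) :
    ∀ u v : V, G.Adj u v →
      ¬((G.neighborSet u).ncard = 2 ∧ (G.neighborSet v).ncard = 2) :=
  stmt3_general G h
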